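/- For the two-class criterion J(B) = (1/μ₁) Σ_{c_i≠c_j} d_H(b_i,b_j) − (1/μ₂) Σ_{c_i=c_j} d_H(b_i,b_j) on B ∈ {0,1}^{m×n}: J(B) = m holds if and only if all intra-class column pairs are identical and all inter-class column pairs are at Hamming distance exactly m. -/

import Mathlib

/-!
Every `l0 (b i - b j)` is at most `m`, so the normalized inter-class term of `J` is
at most `m`, while the intra-class term is nonnegative. Hence `J = m` exactly when every
inter-class distance equals `m` and every intra-class distance vanishes.
-/

open Finset

/-- `‖v‖₀`: number of nonzero entries of a vector (Hamming distance of `b i - b j`). -/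
noncomputable def l0 {m : ℕ} (v : Fin m → ℝ) : ℕ := (univ.filter fun k => v k ≠ 0).card

lemma one_div_mul_sub_one_div_mul_eq_iff {p q x y M : ℝ} (hp : 0 < p) (hq : 0 < q)
    (hx : x ≤ p * M) (hy : 0 ≤ y) : 1 / p * x - 1 / q * y = M ↔ x = p * M ∧ y = 0 := by
  have hxp : 1 / p * x ≤ M := by
    rw [one_div_mul_eq_div, div_le_iff₀' hp]
    exact hx
  have hyq : 0 ≤ 1 / q * y := by positivity
  constructor
  · intro h
    have hy0 : 1 / q * y = 0 := by linarith
    have hx0 : 1 / p * x = M := by linarith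
    refine ⟨?_, ?_⟩
    · field_simp at hx0
      linarith
    · simpa [hq.ne'] using hy0
  · rintro ⟨rfl, rfl⟩
    field_simp
    ring

lemma sum_sum_ite_eq_sum_filter {ι : Type*} [Fintype ι] (r : ι → ι → Prop) [DecidableRel r]
    (f : ι → ι → ℝ) :
    ∑ i, ∑ j, (if r i j then f i j else 0) =
      ∑ q ∈ univ.filter (fun q : ι × ι => r q.1 q.2), f q.1 q.2 := by
  rw [sum_filter, Fintype.sum_prod_type' (fun i j => if r i j then f i j else 0)]

section L0

variable {m : ℕ}

lemma l0_le (v : Fin m → ℝ) : l0 v ≤ m := by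
  simpa [l0] using card_filter_le univ fun k => v k ≠ 0

lemma l0_eq_zero_iff (v : Fin m → ℝ) : l0 v = 0 ↔ v = 0 := by
  simp [l0, filter_eq_empty_iff, funext_iff]

variable {α : Type*} (s : Finset α) (v : α → Fin m → ℝ)

lemma sum_l0_le : ∑ a ∈ s, (l0 (v a) : ℝ) ≤ s.card * m := by
  simpa using sum_le_card_nsmul s (fun a => (l0 (v a) : ℝ)) m
    fun a _ => by exact_mod_cast l0_le (v a)

lemma sum_l0_eq_card_mul_iff :
    ∑ a ∈ s, (l0 (v a) : ℝ) = s.card * m ↔ ∀ a ∈ s, l0 (v a) = m := by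
  have h := sum_eq_sum_iff_of_le (s := s) (f := fun a => (l0 (v a) : ℝ)) (g := fun _ => (m : ℝ))
    fun a _ => by exact_mod_cast l0_le (v a)
  simpa using h

lemma sum_l0_eq_zero_iff : ∑ a ∈ s, (l0 (v a) : ℝ) = 0 ↔ ∀ a ∈ s, v a = 0 := by
  rw [sum_eq_zero_iff_of_nonneg fun a _ => Nat.cast_nonneg _]
  simp [l0_eq_zero_iff]

end L0

theorem J_eq_m_iff_general {m n : ℕ} (b : Fin n → Fin m → ℝ)
    (c : Fin n → Fin 2)
    (μ₁ μ₂ : ℕ)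
    (hμ₁ : μ₁ = (univ.filter fun p : Fin n × Fin n => c p.1 ≠ c p.2).card)
    (hμ₁pos : 0 < μ₁) (hμ₂pos : 0 < μ₂) :
    ((1 / (μ₁ : ℝ)) * ∑ i, ∑ j, (if c i ≠ c j then (l0 (b i - b j) : ℝ) else 0) -
        (1 / (μ₂ : ℝ)) * ∑ i, ∑ j, (if c i = c j then (l0 (b i - b j) : ℝ) else 0) = m)
      ↔ ((∀ i j, c i = c j → b i = b j) ∧ (∀ i j, c i ≠ c j → l0 (b i - b j) = m)) := by
  let v : Fin n × Fin n → Fin m → ℝ := fun q => b q.1 - b q.2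
  rw [sum_sum_ite_eq_sum_filter (fun i j => c i ≠ c j),
    sum_sum_ite_eq_sum_filter (fun i j => c i = c j)]
  have hinter := sum_l0_le (univ.filter fun q : Fin n × Fin n => c q.1 ≠ c q.2) v
  rw [← hμ₁] at hinter
  rw [one_div_mul_sub_one_div_mul_eq_iff (by positivity) (by positivity) hinter
      (sum_nonneg fun _ _ => Nat.cast_nonneg _), hμ₁, sum_l0_eq_card_mul_iff, sum_l0_eq_zero_iff]
  simp only [mem_filter, mem_univ, true_and, Prod.forall, v, sub_eq_zero]
  exact and_comm

/-- Equivalence characterizing the optimal two-class ordinal matrix: `J(B) = m` iff all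
intra-class column pairs are identical and all inter-class column pairs are at Hamming
distance exactly `m`. -/
theorem J_eq_m_iff {m n : ℕ} (b : Fin n → Fin m → ℝ)
    (hb : ∀ j k, b j k = 0 ∨ b j k = 1) (c : Fin n → Fin 2)
    (μ₁ μ₂ : ℕ)
    (hμ₁ : μ₁ = (univ.filter fun p : Fin n × Fin n => c p.1 ≠ c p.2).card)
    (hμ₂ : μ₂ = (univ.filter fun p : Fin n × Fin n => c p.1 = c p.2 ∧ p.1 ≠ p.2).card)
    (hμ₁pos : 0 < μ₁) (hμ₂pos : 0 < μ₂) :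
    ((1 / (μ₁ : ℝ)) * ∑ i, ∑ j, (if c i ≠ c j then (l0 (b i - b j) : ℝ) else 0) -
        (1 / (μ₂ : ℝ)) * ∑ i, ∑ j, (if c i = c j then (l0 (b i - b j) : ℝ) else 0) = m)
      ↔ ((∀ i j, c i = c j → b i = b j) ∧ (∀ i j, c i ≠ c j → l0 (b i - b j) = m)) :=
  J_eq_m_iff_general b c μ₁ μ₂ hμ₁ hμ₁pos hμ₂pos
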